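/- Let G be a finite simple Cayley graph in which every vertex has degree at least 3. Then G is 3-connected. -/

import Mathlib

/-
Watkins–Mader atom argument. Suppose connectivity at least `t` is known and some fragment has a
separator of at most `t` vertices; pick such a fragment `A` of minimum size. Vertex transitivity
moves a vertex of the separator `K` onto a vertex of `A`, giving a congruent fragment `A'` with
separator `K'` meeting `A`. Crossing the two partitions `A, K, B` and `A', K', B'` produces
fragments `A ∩ A'`, `A ∩ B'`, ... that are either strictly smaller than `A` or have separators
smaller than `t`; counting the nine cells of the crossing shows that this is impossible when
`t ≤ 2` and every degree exceeds `t`. Starting from connectivity (Cayley graphs of generating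
sets are connected), two steps give 3-connectivity.
-/

open SimpleGraph

/-- A set `S` of vertices separates `G` if deleting `S` leaves a disconnected graph. -/
def Separates {V : Type*} (G : SimpleGraph V) (S : Set V) : Prop :=
  ¬ (G.induce (Sᶜ : Set V)).Preconnected

/-- `G` is 2-connected: connected, more than 2 vertices, and no cutvertex. -/
def TwoConnected {V : Type*} (G : SimpleGraph V) : Prop :=
  (∃ a b c : V, a ≠ b ∧ a ≠ c ∧ b ≠ c) ∧ G.Connected ∧
    ∀ v : V, (G.induce ({v}ᶜ : Set V)).Connected

/-- `G` is cubic: every vertex has exactly 3 neighbours. -/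
def IsCubic {V : Type*} (G : SimpleGraph V) : Prop :=
  ∀ v : V, (G.neighborSet v).ncard = 3

/-- The Cayley graph of `Γ` with respect to a (symmetric) set `S ⊆ Γ`. -/
def cayley (Γ : Type*) [Group Γ] (S : Set Γ) : SimpleGraph Γ :=
  SimpleGraph.fromRel (fun x y => x⁻¹ * y ∈ S)

open Set

section

variable {V W : Type*}

/-- `A` is a union of some, but not all, components of `G - K`. -/
structure IsFragment (G : SimpleGraph V) (K A : Set V) : Prop where
  nonempty : A.Nonempty
  compl_union_nonempty : (A ∪ K)ᶜ.Nonempty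
  disjoint : Disjoint A K
  mem_of_adj : ∀ ⦃a b⦄, a ∈ A → G.Adj a b → b ∈ A ∪ K

namespace IsFragment

variable {G : SimpleGraph V} {K A K' A' : Set V}

theorem compl_union (h : IsFragment G K A) : IsFragment G K (A ∪ K)ᶜ where
  nonempty := h.compl_union_nonempty
  compl_union_nonempty := h.nonempty.mono fun a ha hmem =>
    hmem.elim (· (Or.inl ha)) (h.disjoint.notMem_of_mem_left ha)
  disjoint := disjoint_compl_left.mono_right subset_union_right
  mem_of_adj b a hb hba := by
    by_contra ha
    have haA : a ∈ A := by
      simp only [mem_union, mem_compl_iff, not_or] at ha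
      tauto
    exact hb (h.mem_of_adj haA hba.symm)

theorem inter (h : IsFragment G K A) (h' : IsFragment G K' A') (hne : (A ∩ A').Nonempty) :
    IsFragment G (A ∩ K' ∪ K ∩ A' ∪ K ∩ K') (A ∩ A') where
  nonempty := hne
  compl_union_nonempty := h.compl_union_nonempty.mono <| compl_subset_compl.mpr <| by
    rintro z (⟨hz, -⟩ | ((⟨hz, -⟩ | ⟨hz, -⟩) | ⟨hz, -⟩)) <;> simp [hz]
  disjoint := by
    rw [Set.disjoint_left]
    rintro z ⟨hzA, hzA'⟩ hz
    have := h.disjoint.notMem_of_mem_left hzA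
    have := h'.disjoint.notMem_of_mem_left hzA'
    simp_all
  mem_of_adj a b ha hab := by
    have := h.mem_of_adj ha.1 hab
    have := h'.mem_of_adj ha.2 hab
    simp only [mem_union, mem_inter_iff] at *
    tauto

theorem image {H : SimpleGraph W} (h : IsFragment G K A) (φ : G ≃g H) :
    IsFragment H (φ '' K) (φ '' A) where
  nonempty := h.nonempty.image φ
  compl_union_nonempty := by
    rw [← image_union, ← image_compl_eq φ.bijective]
    exact h.compl_union_nonempty.image φ
  disjoint := (disjoint_image_iff φ.injective).mpr h.disjoint
  mem_of_adj := by
    rintro _ b ⟨a, ha, rfl⟩ hab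
    rw [← image_union, ← φ.apply_symm_apply b]
    exact mem_image_of_mem φ (h.mem_of_adj ha (by simpa using φ.symm.map_adj_iff.mpr hab))

theorem separator_nonempty (h : IsFragment G K A) (hG : G.Preconnected) : K.Nonempty := by
  obtain ⟨a, ha⟩ := h.nonempty
  obtain ⟨b, hb⟩ := h.compl_union_nonempty
  obtain ⟨d, -, hdA, hdA'⟩ := (hG a b).some.exists_boundary_dart A ha fun hbA => hb (Or.inl hbA)
  exact ⟨d.snd, (h.mem_of_adj hdA d.adj).resolve_left hdA'⟩

theorem ncard_neighborSet_lt [Finite V] (h : IsFragment G K A) {a : V} (ha : a ∈ A) :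
    (G.neighborSet a).ncard < A.ncard + K.ncard := by
  have hsub : G.neighborSet a ⊂ A ∪ K :=
    ssubset_of_subset_not_subset (fun b hab => h.mem_of_adj ha hab)
      fun hsub => G.irrefl (hsub (Or.inl ha))
  exact (ncard_lt_ncard hsub).trans_le (ncard_union_le A K)

end IsFragment

theorem Separates.exists_isFragment {G : SimpleGraph V} {K : Set V} (h : Separates G K) :
    ∃ A, IsFragment G K A := by
  obtain ⟨u, v, huv⟩ : ∃ u v : ↥Kᶜ, ¬ (G.induce Kᶜ).Reachable u v := by
    simpa [Separates, Preconnected] using h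
  refine ⟨{w | ∃ hw : w ∈ Kᶜ, (G.induce Kᶜ).Reachable u ⟨w, hw⟩}, ⟨u, u.2, .rfl⟩, ⟨v, ?_⟩,
    Set.disjoint_left.mpr fun _ ⟨hw, _⟩ => hw, ?_⟩
  · rintro (⟨_, hr⟩ | hvK)
    exacts [huv hr, v.2 hvK]
  · rintro a b ⟨_, hr⟩ hab
    by_cases hb : b ∈ K
    exacts [Or.inr hb, Or.inl ⟨hb, hr.trans (Adj.reachable hab)⟩]

theorem ncard_inter_add_ncard_inter_add_ncard_inter_compl [Finite V] {A K : Set V}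
    (h : Disjoint A K) (s : Set V) :
    (s ∩ A).ncard + (s ∩ K).ncard + (s ∩ (A ∪ K)ᶜ).ncard = s.ncard := by
  rw [← ncard_union_eq (h.mono inter_subset_right inter_subset_right), ← inter_union_distrib_left,
    ← sdiff_eq, ncard_inter_add_ncard_sdiff_eq_ncard]

theorem ncard_inter_add_ncard_inter_add_ncard_compl_inter [Finite V] {A K : Set V}
    (h : Disjoint A K) (s : Set V) :
    (A ∩ s).ncard + (K ∩ s).ncard + ((A ∪ K)ᶜ ∩ s).ncard = s.ncard := by
  rw [inter_comm A, inter_comm K, inter_comm (A ∪ K)ᶜ]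
  exact ncard_inter_add_ncard_inter_add_ncard_inter_compl h s

theorem ncard_union_union_le (s t u : Set V) : (s ∪ t ∪ u).ncard ≤ s.ncard + t.ncard + u.ncard :=
  (ncard_union_le _ _).trans (Nat.add_le_add_right (ncard_union_le _ _) _)

structure IsMinFragment (G : SimpleGraph V) (t : ℕ) (K A : Set V) : Prop where
  isFragment : IsFragment G K A
  ncard_le : K.ncard ≤ t
  ncard_le_of_isFragment : ∀ ⦃L X⦄, IsFragment G L X → L.ncard ≤ t → A.ncard ≤ X.ncard

namespace IsMinFragment

variable {G : SimpleGraph V} {t : ℕ} {K A K' A' : Set V}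

theorem exists_of_isFragment (h : IsFragment G K A) (hK : K.ncard ≤ t) :
    ∃ K A, IsMinFragment G t K A := by
  classical
  have hsize : ∃ n, ∃ K A, IsFragment G K A ∧ K.ncard ≤ t ∧ A.ncard = n := ⟨_, K, A, h, hK, rfl⟩
  obtain ⟨K, A, hKA, hK, hn⟩ := Nat.find_spec hsize
  exact ⟨K, A, hKA, hK, fun L X hLX hL => hn ▸ Nat.find_min' hsize ⟨L, X, hLX, hL, rfl⟩⟩

theorem lt_ncard_of_inter_nonempty [Finite V] (hA : IsMinFragment G t K A)
    (hA' : IsFragment G K' A') (hne : (A ∩ A').Nonempty) (hsub : ¬ A ⊆ A') :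
    t < (A ∩ K').ncard + (K ∩ A').ncard + (K ∩ K').ncard := by
  by_contra! hle
  have hmin := hA.ncard_le_of_isFragment (hA.isFragment.inter hA' hne)
    ((ncard_union_union_le _ _ _).trans hle)
  exact hsub (inter_eq_left.mp (eq_of_subset_of_ncard_le inter_subset_left hmin))

theorem disjoint_separator [Finite V] (hA : IsMinFragment G t K A)
    (hprev : ∀ L X, IsFragment G L X → t ≤ L.ncard) (ht : t ≤ 2) (hAcard : 2 ≤ A.ncard)
    (hA' : IsFragment G K' A') (hA'card : A'.ncard = A.ncard) (hK' : K'.ncard ≤ t) :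
    Disjoint A K' := by
  rw [Set.disjoint_iff_inter_eq_empty]
  by_contra haK'
  obtain ⟨a, ha, haK'⟩ := nonempty_iff_ne_empty.mpr haK'
  have haA' : a ∉ A' := hA'.disjoint.notMem_of_mem_right haK'
  have hKt := le_antisymm hA.ncard_le (hprev _ _ hA.isFragment)
  have hK't := hprev _ _ hA'
  have hB := hA.isFragment.compl_union
  have hB' := hA'.compl_union
  -- Row and column sums of the table of cells `X ∩ Y'`, and constraints on its four corners.
  have rowA := ncard_inter_add_ncard_inter_add_ncard_inter_compl hA'.disjoint A
  have rowK := ncard_inter_add_ncard_inter_add_ncard_inter_compl hA'.disjoint K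
  have rowB := ncard_inter_add_ncard_inter_add_ncard_inter_compl hA'.disjoint (A ∪ K)ᶜ
  have colA := ncard_inter_add_ncard_inter_add_ncard_compl_inter hA.isFragment.disjoint A'
  have colK := ncard_inter_add_ncard_inter_add_ncard_compl_inter hA.isFragment.disjoint K'
  have colB := ncard_inter_add_ncard_inter_add_ncard_compl_inter hA.isFragment.disjoint (A' ∪ K')ᶜ
  have hBcard : (A ∪ K)ᶜ.ncard ≠ 0 := ((ncard_pos).mpr hA.isFragment.compl_union_nonempty).ne'
  have hB'card : A.ncard ≤ (A' ∪ K')ᶜ.ncard := hA.ncard_le_of_isFragment hB' hK'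
  have hAA' : (A ∩ A').ncard ≠ 0 → t < (A ∩ K').ncard + (K ∩ A').ncard + (K ∩ K').ncard :=
    fun h => hA.lt_ncard_of_inter_nonempty hA' (nonempty_of_ncard_ne_zero h)
      fun hs => haA' (hs ha)
  have hAB' : (A ∩ (A' ∪ K')ᶜ).ncard ≠ 0 →
      t < (A ∩ K').ncard + (K ∩ (A' ∪ K')ᶜ).ncard + (K ∩ K').ncard :=
    fun h => hA.lt_ncard_of_inter_nonempty hB' (nonempty_of_ncard_ne_zero h)
      fun hs => hs ha (Or.inr haK')
  have hBA' : ((A ∪ K)ᶜ ∩ A').ncard ≠ 0 →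
      t ≤ ((A ∪ K)ᶜ ∩ K').ncard + (K ∩ A').ncard + (K ∩ K').ncard :=
    fun h => (hprev _ _ (hB.inter hA' (nonempty_of_ncard_ne_zero h))).trans
      (ncard_union_union_le _ _ _)
  have hBB' : ((A ∪ K)ᶜ ∩ (A' ∪ K')ᶜ).ncard ≠ 0 →
      t ≤ ((A ∪ K)ᶜ ∩ K').ncard + (K ∩ (A' ∪ K')ᶜ).ncard + (K ∩ K').ncard :=
    fun h => (hprev _ _ (hB.inter hB' (nonempty_of_ncard_ne_zero h))).trans
      (ncard_union_union_le _ _ _)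
  omega

end IsMinFragment

def SimpleGraph.IsVertexTransitive (G : SimpleGraph V) : Prop :=
  ∀ u v : V, ∃ φ : G ≃g G, φ u = v

theorem SimpleGraph.IsVertexTransitive.lt_ncard_of_isFragment [Finite V] {G : SimpleGraph V}
    (hG : G.IsVertexTransitive) {t : ℕ} (ht₀ : 0 < t) (ht₂ : t ≤ 2)
    (hdeg : ∀ v, t < (G.neighborSet v).ncard)
    (hprev : ∀ K A, IsFragment G K A → t ≤ K.ncard) {K₀ A₀ : Set V} (h₀ : IsFragment G K₀ A₀) :
    t < K₀.ncard := by
  by_contra! hK₀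
  obtain ⟨K, A, hA⟩ := IsMinFragment.exists_of_isFragment h₀ hK₀
  obtain ⟨a, ha⟩ := hA.isFragment.nonempty
  obtain ⟨x, hx⟩ : K.Nonempty :=
    nonempty_of_ncard_ne_zero (hprev _ _ hA.isFragment |>.trans_lt' ht₀).ne'
  obtain ⟨φ, rfl⟩ := hG x a
  have hAcard : 2 ≤ A.ncard := by
    have := hdeg (φ x)
    have := hA.isFragment.ncard_neighborSet_lt ha
    have := hA.ncard_le
    omega
  have hdisj := hA.disjoint_separator hprev ht₂ hAcard (hA.isFragment.image φ)
    (ncard_image_of_injective _ φ.injective)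
    ((ncard_image_of_injective _ φ.injective).trans_le hA.ncard_le)
  exact hdisj.notMem_of_mem_left ha (mem_image_of_mem φ hx)

theorem connected_induce_compl_of_forall_not_isFragment [Finite V] {G : SimpleGraph V}
    {K : Set V} (hK : K.ncard < Nat.card V) (h : ∀ A, ¬ IsFragment G K A) :
    (G.induce Kᶜ).Connected where
  preconnected := by
    by_contra hsep
    obtain ⟨A, hA⟩ := Separates.exists_isFragment hsep
    exact h A hA
  nonempty := by
    have := ncard_add_ncard_compl K
    exact (nonempty_of_ncard_ne_zero (by omega)).to_subtype

theorem SimpleGraph.ncard_neighborSet_lt_card [Finite V] (G : SimpleGraph V) (v : V) :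
    (G.neighborSet v).ncard < Nat.card V :=
  ncard_lt_card fun h => G.irrefl (h.symm ▸ mem_univ v : v ∈ G.neighborSet v)

theorem cayley_eq_mulCayley {Γ : Type*} [Group Γ] (S : Set Γ) : cayley Γ S = mulCayley S := by
  ext u v
  simp [cayley, mulCayley_adj]

theorem SimpleGraph.isVertexTransitive_mulCayley {M : Type*} [Group M] (s : Set M) :
    (mulCayley s).IsVertexTransitive := fun u v =>
  ⟨⟨Equiv.mulLeft (v * u⁻¹), mulCayley_adj_mul_iff_right⟩, by simp⟩

theorem SimpleGraph.mulCayley_connected {M : Type*} [Group M] {s : Set M}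
    (hs : Subgroup.closure s = ⊤) : (mulCayley s).Connected := by
  have reachable_mul (g : M) {u v : M} (h : (mulCayley s).Reachable u v) :
      (mulCayley s).Reachable (g * u) (g * v) :=
    h.map ⟨(g * ·), mulCayley_adj_mul_iff_right.mpr⟩
  refine (connected_iff_exists_forall_reachable _).mpr ⟨1, fun g => ?_⟩
  have hg : g ∈ Subgroup.closure s := hs ▸ Subgroup.mem_top g
  induction hg using Subgroup.closure_induction with
  | mem x hx =>
    by_cases h1 : 1 = x
    · exact h1 ▸ .rfl
    · exact Adj.reachable ((mulCayley_adj s 1 x).mpr ⟨h1, Or.inl (by simpa using hx)⟩)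
  | one => exact .rfl
  | mul x y _ _ hx hy => exact hx.trans (by simpa using reachable_mul x hy)
  | inv x _ hx => simpa using (reachable_mul x⁻¹ hx).symm

end

/-- A finite (simple) Cayley graph in which every vertex has at least 3 neighbours is
3-connected: it has more than 3 vertices, is connected, and remains connected after the
deletion of any two vertices. -/
theorem stmt19 {Γ : Type*} [Group Γ] [Finite Γ] (S : Set Γ)
    (hgen : Subgroup.closure S = ⊤)
    (hdeg : ∀ v : Γ, 3 ≤ ((cayley Γ S).neighborSet v).ncard) :
    3 < Nat.card Γ ∧ (cayley Γ S).Connected ∧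
      ∀ x y : Γ, ((cayley Γ S).induce (({x, y} : Set Γ)ᶜ)).Connected := by
  rw [cayley_eq_mulCayley] at hdeg ⊢
  have hconn := mulCayley_connected hgen
  have htrans := isVertexTransitive_mulCayley S
  have hcard : 3 < Nat.card Γ := (hdeg 1).trans_lt (ncard_neighborSet_lt_card _ 1)
  have hκ₁ (K A : Set Γ) (h : IsFragment (mulCayley S) K A) : 1 ≤ K.ncard :=
    (ncard_pos).mpr (h.separator_nonempty hconn.preconnected)
  have hκ₂ (K A : Set Γ) (h : IsFragment (mulCayley S) K A) : 2 ≤ K.ncard :=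
    htrans.lt_ncard_of_isFragment one_pos one_le_two (fun v => (hdeg v).trans_lt' (by norm_num))
      hκ₁ h
  have hκ₃ (K A : Set Γ) (h : IsFragment (mulCayley S) K A) : 3 ≤ K.ncard :=
    htrans.lt_ncard_of_isFragment two_pos le_rfl hdeg hκ₂ h
  refine ⟨hcard, hconn, fun x y => ?_⟩
  have hxy : ({x, y} : Set Γ).ncard ≤ 2 := (ncard_insert_le x {y}).trans (by rw [ncard_singleton])
  exact connected_induce_compl_of_forall_not_isFragment (by omega)
    fun A hA => absurd (hκ₃ _ A hA) (by omega)
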